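/- Under the SETUP and the ALGORITHM, the accumulated weighted gradient energy is summable: Σ_{k=0}^∞ ⟨x^k, (H_{G^k} ⊗ I_d) x^k⟩ ≤ (D(w^0) − D*)/ρ < ∞, and consequently lim_{k→∞} max_{{i,j}∈E^k} ‖x_i^k − x_j^k‖ = 0. -/

import Mathlib

noncomputable section

open scoped BigOperators

abbrev Evec (d : ℕ) := EuclideanSpace ℝ (Fin d)
abbrev ENvec (n d : ℕ) := PiLp 2 (fun _ : Fin n => EuclideanSpace ℝ (Fin d))

/-- Real inner product on `ℝ^d`. -/
def ip {d : ℕ} (x y : Evec d) : ℝ := inner ℝ x y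

/-- Real inner product on `ℝ^{nd}`. -/
def ipN {n d : ℕ} (x y : ENvec n d) : ℝ := inner ℝ x y

/-- `g` is a subgradient of `f` at `x`. -/
def IsSubgradientAt {d : ℕ} (f : Evec d → ℝ) (g x : Evec d) : Prop :=
  ∀ y, f x + ip g (y - x) ≤ f y

/-- `f` is strongly convex on `X` with parameter `θ`. -/
def StrongConvexOnWith {d : ℕ} (X : Set (Evec d)) (θ : ℝ) (f : Evec d → ℝ) : Prop :=
  ∀ x ∈ X, ∀ y ∈ X, ∀ g, IsSubgradientAt f g x →
    θ / 2 * ‖y - x‖ ^ 2 ≤ f y - f x - ip g (y - x)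

structure Setup (n d : ℕ) : Type where
  hn : 2 ≤ n
  hd : 1 ≤ d
  X : Fin n → Set (Evec d)
  f : Fin n → Evec d → ℝ
  θ : Fin n → ℝ
  hθ : ∀ i, 0 < θ i
  hXne : ∀ i, (X i).Nonempty
  hXclosed : ∀ i, IsClosed (X i)
  hXconv : ∀ i, Convex ℝ (X i)
  hfconv : ∀ i, ConvexOn ℝ Set.univ (f i)
  hstrong : ∀ i, StrongConvexOnWith (X i) (θ i) (f i)
  hzero : (0 : Evec d) ∈ interior (⋂ i, X i)
  xt : Fin n → Evec d → Evec d
  hxt_mem : ∀ i w, xt i w ∈ X i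
  hxt_max : ∀ i w, ∀ x ∈ X i, ip w x - f i x ≤ ip w (xt i w) - f i (xt i w)
  hxt_uniq : ∀ i w x, x ∈ X i →
    ip w x - f i x = ip w (xt i w) - f i (xt i w) → x = xt i w
  xstar : Evec d
  hxstar_mem : xstar ∈ ⋂ i, X i
  hxstar_min : ∀ x ∈ ⋂ i, X i, (∑ i, f i xstar) ≤ ∑ i, f i x

namespace Setup

variable {n d : ℕ} (P : Setup n d)

/-- Lipschitz constants `L_i = 1/θ_i`. -/
def Lip (i : Fin n) : ℝ := 1 / P.θ i

/-- `L = max_i L_i`. -/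
def Lmax : ℝ := ⨆ i, P.Lip i

/-- The conjugate function `d_i`. -/
def dconj (i : Fin n) (w : Evec d) : ℝ := ip w (P.xt i w) - P.f i (P.xt i w)

/-- The Fenchel dual function `D`. -/
def D (w : ENvec n d) : ℝ := ∑ i, P.dconj i (w i)

/-- The map `x̃ = ∇D`. -/
def xtv (w : ENvec n d) : ENvec n d := WithLp.toLp 2 (fun i => P.xt i (w i))

/-- The primal objective `F`. -/
def Fobj (x : ENvec n d) : ℝ := ∑ i, P.f i (x i)

/-- The optimal primal value. -/
def Fstar : ℝ := ∑ i, P.f i P.xstar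

/-- The primal optimum `𝐱* = (x*, …, x*)`. -/
def xstarv : ENvec n d := WithLp.toLp 2 (fun _ => P.xstar)

end Setup

/-- The subspace `S^⊥ = {w : w_1 + ⋯ + w_n = 0}`. -/
def Sperp (n d : ℕ) : Submodule ℝ (ENvec n d) where
  carrier := {w | ∑ i, w i = 0}
  add_mem' := by
    intro a b ha hb
    simp only [Set.mem_setOf_eq] at ha hb ⊢
    calc ∑ i, (a + b) i = ∑ i, (a i + b i) := rfl
    _ = (∑ i, a i) + ∑ i, b i := Finset.sum_add_distrib
    _ = 0 := by rw [ha, hb, add_zero]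
  zero_mem' := by
    simp only [Set.mem_setOf_eq]
    calc ∑ i, (0 : ENvec n d) i = ∑ _i : Fin n, (0 : Evec d) := rfl
    _ = 0 := by simp
  smul_mem' := by
    intro c a ha
    simp only [Set.mem_setOf_eq] at ha ⊢
    calc ∑ i, (c • a) i = ∑ i, c • a i := rfl
    _ = c • ∑ i, a i := Finset.smul_sum.symm
    _ = 0 := by rw [ha, smul_zero]

/-- Orthogonal projection onto `S^⊥`. -/
def projSperp {n d : ℕ} (x : ENvec n d) : ENvec n d :=
  ((Sperp n d).orthogonalProjectionOnto x : ENvec n d)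

namespace Setup

variable {n d : ℕ} (P : Setup n d)

/-- The optimal dual value `D* = min_{w ∈ S^⊥} D(w)`. -/
def Dstar : ℝ := sInf (P.D '' (Sperp n d : Set (ENvec n d)))

end Setup

/-- Block action of `H ⊗ I_d` on `ℝ^{nd}`. -/
def blockMul {n d : ℕ} (H : Matrix (Fin n) (Fin n) ℝ) (w : ENvec n d) : ENvec n d :=
  WithLp.toLp 2 (fun i => ∑ j, H i j • w j)

/-- A time-varying sequence of weighted undirected graphs. -/
structure GraphSeq (n : ℕ) : Type where
  adj : ℕ → Fin n → Fin n → Bool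
  adj_symm : ∀ k i j, adj k i j = adj k j i
  adj_irrefl : ∀ k i, adj k i i = false
  adj_ne : ∀ k, ∃ i j, adj k i j = true
  h : ℕ → Fin n → Fin n → ℝ
  h_symm : ∀ k i j, h k i j = h k j i
  hlow : ℝ
  hhigh : ℝ
  hlow_pos : 0 < hlow
  h_mem : ∀ k i j, adj k i j = true → h k i j ∈ Set.Icc hlow hhigh

namespace GraphSeq

variable {n : ℕ} (Gs : GraphSeq n)

/-- The weight matrix `H_{G^k}`. -/
def H (k : ℕ) : Matrix (Fin n) (Fin n) ℝ :=
  Matrix.of fun i j =>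
    if i = j then ∑ l, (if Gs.adj k i l = true then Gs.h k i l else 0)
    else if Gs.adj k i j = true then -(Gs.h k i j) else 0

end GraphSeq

/-- The Fenchel dual gradient algorithm: step sizes, iterates, and their defining relations. -/
structure Algo (n d : ℕ) (P : Setup n d) (Gs : GraphSeq n) : Type where
  δ : ℝ
  hδ_pos : 0 < δ
  hδ : ∀ k, (δ • Matrix.diagonal (fun i => (P.Lip i)⁻¹) - Gs.H k).PosSemidef
  αlo : ℝ
  αhi : ℝ
  hαlo : 0 < αlo
  hαhi : αhi < 2 / δ
  α : ℕ → ℝ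
  hα : ∀ k, α k ∈ Set.Icc αlo αhi
  w : ℕ → ENvec n d
  hw0 : w 0 ∈ Sperp n d
  hrec : ∀ k, w (k + 1) = w k - α k • blockMul (Gs.H k) (P.xtv (w k))

namespace Algo

variable {n d : ℕ} {P : Setup n d} {Gs : GraphSeq n} (A : Algo n d P Gs)

/-- Primal iterates `x^k = ∇D(w^k)`. -/
def x (k : ℕ) : ENvec n d := P.xtv (A.w k)

/-- The constant `ρ = min{α̲ − α̲²δ/2, ᾱ − ᾱ²δ/2}`. -/
def ρ : ℝ := min (A.αlo - A.αlo ^ 2 * A.δ / 2) (A.αhi - A.αhi ^ 2 * A.δ / 2)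

end Algo

/-
Each conjugate `d_i` is `L_i`-smooth: strong convexity makes `⟨w, ·⟩ - f_i` grow quadratically
away from its maximiser `x̃_i(w)` (the needed subgradients of the finite convex `f_i` come from
Hahn–Banach applied to the one-sided directional derivative). So a dual step
`w - α (H ⊗ I) x` lowers `D` by at least `(α - α² δ / 2) ⟨x, (H ⊗ I) x⟩`, where
`⟨H x, Λ_L H x⟩ ≤ δ ⟨x, H x⟩` follows from `H ⪯ δ Λ_L⁻¹` by Cauchy–Schwarz for the semi-inner
product of `H`. The iterates stay in `S^⊥`, on which `D ≥ -F*` by weak duality, so the decreases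
telescope to `Σ_k ⟨x^k, (H ⊗ I) x^k⟩ ≤ (D(w⁰) - D*) / ρ`. Finally the Laplacian identity
`⟨x, (H ⊗ I) x⟩ = ½ Σ_{i,j} h_ij ‖x_i - x_j‖²` bounds every edge difference by
`√(⟨x^k, (H ⊗ I) x^k⟩ / h̲)`, which tends to `0`.
-/

open Set Filter Topology
open scoped InnerProductSpace Matrix MatrixOrder

section Subgradient

variable {E : Type*} [AddCommGroup E] [Module ℝ E] {f : E → ℝ} {x : E}

/-- For convex `f` this infimum of difference quotients is the one-sided directional derivative. -/
def rightDirDeriv (f : E → ℝ) (x v : E) : ℝ :=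
  ⨅ t : Ioi (0 : ℝ), (f (x + (t : ℝ) • v) - f x) / t

lemma ConvexOn.comp_add_smul (hf : ConvexOn ℝ univ f) (x v : E) :
    ConvexOn ℝ univ (fun t : ℝ => f (x + t • v)) := by
  refine ⟨convex_univ, fun s _ t _ a b ha hb hab => ?_⟩
  have hcomb : x + (a • s + b • t) • v = a • (x + s • v) + b • (x + t • v) := by
    conv_lhs => rw [← one_smul ℝ x, ← hab]
    module
  change f (x + (a • s + b • t) • v) ≤ a • f (x + s • v) + b • f (x + t • v)
  rw [hcomb]
  exact hf.2 (mem_univ _) (mem_univ _) ha hb hab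

lemma ConvexOn.diffQuot_le_diffQuot (hf : ConvexOn ℝ univ f) (v : E) {s t : ℝ} (hs : s ≠ 0)
    (ht : 0 < t) (hst : s ≤ t) :
    (f (x + s • v) - f x) / s ≤ (f (x + t • v) - f x) / t := by
  simpa using (hf.comp_add_smul x v).secant_mono (a := 0) (mem_univ _) (mem_univ _) (mem_univ _)
    hs ht.ne' hst

lemma ConvexOn.bddBelow_diffQuot (hf : ConvexOn ℝ univ f) (x v : E) :
    BddBelow (range fun t : Ioi (0 : ℝ) => (f (x + (t : ℝ) • v) - f x) / t) :=
  ⟨(f (x + (-1 : ℝ) • v) - f x) / (-1), by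
    rintro _ ⟨t, rfl⟩
    exact hf.diffQuot_le_diffQuot v (by norm_num) t.2 (by linarith [t.2.out])⟩

lemma ConvexOn.rightDirDeriv_le (hf : ConvexOn ℝ univ f) (v : E) {t : ℝ} (ht : 0 < t) :
    rightDirDeriv f x v ≤ (f (x + t • v) - f x) / t :=
  ciInf_le (hf.bddBelow_diffQuot x v) ⟨t, ht⟩

lemma le_rightDirDeriv {v : E} {c : ℝ} (h : ∀ t : ℝ, 0 < t → c ≤ (f (x + t • v) - f x) / t) :
    c ≤ rightDirDeriv f x v :=
  le_ciInf fun t => h t t.2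

lemma diffQuot_smul {v : E} {c t : ℝ} (hc : c ≠ 0) (ht : t ≠ 0) :
    (f (x + t • c • v) - f x) / t = c * ((f (x + (t * c) • v) - f x) / (t * c)) := by
  rw [smul_smul]
  field_simp

lemma ConvexOn.rightDirDeriv_smul (hf : ConvexOn ℝ univ f) (v : E) {c : ℝ} (hc : 0 < c) :
    rightDirDeriv f x (c • v) = c * rightDirDeriv f x v := by
  apply le_antisymm
  · rw [← div_le_iff₀' hc]
    refine le_rightDirDeriv fun t ht => ?_
    rw [div_le_iff₀' hc]
    have := hf.rightDirDeriv_le (x := x) (c • v) (div_pos ht hc)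
    rwa [diffQuot_smul hc.ne' (div_pos ht hc).ne', div_mul_cancel₀ _ hc.ne'] at this
  · refine le_rightDirDeriv fun t ht => ?_
    rw [diffQuot_smul hc.ne' ht.ne']
    exact mul_le_mul_of_nonneg_left (hf.rightDirDeriv_le v (mul_pos ht hc)) hc.le

lemma ConvexOn.rightDirDeriv_add_le_diffQuot_add (hf : ConvexOn ℝ univ f) (u v : E) {s t : ℝ}
    (hs : 0 < s) (ht : 0 < t) :
    rightDirDeriv f x (u + v) ≤ (f (x + s • u) - f x) / s + (f (x + t • v) - f x) / t := by
  set r := min s t / 2 with hr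
  have hr0 : 0 < r := half_pos (lt_min hs ht)
  have hmid : f (x + r • (u + v)) ≤ f (x + (2 * r) • u) / 2 + f (x + (2 * r) • v) / 2 := by
    have h := hf.2 (mem_univ (x + (2 * r) • u)) (mem_univ (x + (2 * r) • v))
      (by norm_num : (0 : ℝ) ≤ 1 / 2) (by norm_num : (0 : ℝ) ≤ 1 / 2) (by norm_num)
    have e : (1 / 2 : ℝ) • (x + (2 * r) • u) + (1 / 2 : ℝ) • (x + (2 * r) • v)
        = x + r • (u + v) := by module
    rw [e] at h
    simp only [smul_eq_mul] at h
    linarith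
  calc rightDirDeriv f x (u + v) ≤ (f (x + r • (u + v)) - f x) / r := hf.rightDirDeriv_le _ hr0
    _ ≤ (f (x + (2 * r) • u) - f x) / (2 * r) + (f (x + (2 * r) • v) - f x) / (2 * r) := by
      rw [← add_div, div_le_div_iff₀ hr0 (by positivity)]
      nlinarith
    _ ≤ _ := add_le_add
      (hf.diffQuot_le_diffQuot u (by positivity) hs (by linarith [min_le_left s t]))
      (hf.diffQuot_le_diffQuot v (by positivity) ht (by linarith [min_le_right s t]))

lemma ConvexOn.rightDirDeriv_add_le (hf : ConvexOn ℝ univ f) (u v : E) :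
    rightDirDeriv f x (u + v) ≤ rightDirDeriv f x u + rightDirDeriv f x v := by
  have h1 : ∀ t : ℝ, 0 < t →
      rightDirDeriv f x (u + v) - (f (x + t • v) - f x) / t ≤ rightDirDeriv f x u :=
    fun t ht => le_rightDirDeriv fun s hs => by
      linarith [hf.rightDirDeriv_add_le_diffQuot_add (x := x) u v hs ht]
  have h2 : rightDirDeriv f x (u + v) - rightDirDeriv f x u ≤ rightDirDeriv f x v :=
    le_rightDirDeriv fun t ht => by linarith [h1 t ht]
  linarith

lemma ConvexOn.exists_linearMap_le_sub (hf : ConvexOn ℝ univ f) (x : E) :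
    ∃ g : E →ₗ[ℝ] ℝ, ∀ y, g (y - x) ≤ f y - f x := by
  have h0 : rightDirDeriv f x 0 = 0 := by simp [rightDirDeriv]
  obtain ⟨g, -, hg⟩ := exists_extension_of_le_sublinear ⟨⊥, 0⟩ (rightDirDeriv f x)
    (fun c hc v => hf.rightDirDeriv_smul v hc) hf.rightDirDeriv_add_le
    (fun ⟨v, hv⟩ => by rw [Submodule.mem_bot] at hv; subst hv; simp [h0])
  refine ⟨g, fun y => (hg _).trans ?_⟩
  simpa using hf.rightDirDeriv_le (x := x) (y - x) one_pos

end Subgradient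

lemma ConvexOn.exists_isSubgradientAt {d : ℕ} {f : Evec d → ℝ} (hf : ConvexOn ℝ univ f)
    (x : Evec d) : ∃ g, IsSubgradientAt f g x := by
  obtain ⟨g, hg⟩ := hf.exists_linearMap_le_sub x
  refine ⟨(InnerProductSpace.toDual ℝ (Evec d)).symm (LinearMap.toContinuousLinearMap g),
    fun y => ?_⟩
  have hgy := hg y
  simp only [ip, InnerProductSpace.toDual_symm_apply, LinearMap.coe_toContinuousLinearMap']
  linarith

namespace StrongConvexOnWith

variable {d : ℕ} {X : Set (Evec d)} {θ : ℝ} {f : Evec d → ℝ}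

lemma apply_convexCombo_le (hs : StrongConvexOnWith X θ f) (hf : ConvexOn ℝ univ f)
    (hX : Convex ℝ X) {x y : Evec d} (hx : x ∈ X) (hy : y ∈ X) {t : ℝ} (ht0 : 0 ≤ t)
    (ht1 : t ≤ 1) :
    f ((1 - t) • x + t • y) ≤ (1 - t) * f x + t * f y - θ / 2 * (t * (1 - t)) * ‖y - x‖ ^ 2 := by
  set z := (1 - t) • x + t • y
  obtain ⟨g, hg⟩ := hf.exists_isSubgradientAt z
  have hz : z ∈ X := hX hx hy (by linarith : (0 : ℝ) ≤ 1 - t) ht0 (by ring)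
  have hx' := hs z hz x hx g hg
  have hy' := hs z hz y hy g hg
  have hxz : x - z = (-t) • (y - x) := by module
  have hyz : y - z = (1 - t) • (y - x) := by module
  rw [hxz, norm_smul, norm_neg, Real.norm_of_nonneg ht0] at hx'
  rw [hyz, norm_smul, Real.norm_of_nonneg (by linarith)] at hy'
  -- the first-order terms cancel because `(1 - t) • (x - z) + t • (y - z) = 0`
  have hcancel : (1 - t) * ip g ((-t) • (y - x)) + t * ip g ((1 - t) • (y - x)) = 0 := by
    simp only [ip, inner_smul_right]
    ring
  nlinarith [mul_le_mul_of_nonneg_left hx' (by linarith : (0 : ℝ) ≤ 1 - t),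
    mul_le_mul_of_nonneg_left hy' ht0]

lemma add_sq_le_of_forall_le (hs : StrongConvexOnWith X θ f) (hf : ConvexOn ℝ univ f)
    (hX : Convex ℝ X) {w m : Evec d} (hm : m ∈ X)
    (hmax : ∀ x ∈ X, ip w x - f x ≤ ip w m - f m) {y : Evec d} (hy : y ∈ X) :
    ip w y - f y + θ / 2 * ‖y - m‖ ^ 2 ≤ ip w m - f m := by
  have hsegment : ∀ t ∈ Ioo (0 : ℝ) 1,
      ip w y - f y + θ / 2 * ((1 - t) * ‖y - m‖ ^ 2) ≤ ip w m - f m := by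
    rintro t ⟨ht0, ht1⟩
    have hz := hmax _ (hX hm hy (by linarith : (0 : ℝ) ≤ 1 - t) ht0.le (by ring))
    have hf_z := hs.apply_convexCombo_le hf hX hm hy ht0.le ht1.le
    have hip : ip w ((1 - t) • m + t • y) = (1 - t) * ip w m + t * ip w y := by
      simp only [ip, inner_add_right, real_inner_smul_right]
    rw [hip] at hz
    refine le_of_mul_le_mul_left ?_ ht0
    nlinarith
  have hlim : Tendsto (fun t : ℝ => ip w y - f y + θ / 2 * ((1 - t) * ‖y - m‖ ^ 2)) (𝓝[>] 0)
      (𝓝 (ip w y - f y + θ / 2 * ‖y - m‖ ^ 2)) := by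
    have hc : Continuous fun t : ℝ => ip w y - f y + θ / 2 * ((1 - t) * ‖y - m‖ ^ 2) := by
      fun_prop
    simpa using hc.continuousWithinAt (s := Ioi 0) (x := 0) |>.tendsto
  exact le_of_tendsto hlim (eventually_of_mem (Ioo_mem_nhdsGT one_pos) hsegment)

end StrongConvexOnWith

namespace Setup

variable {n d : ℕ} (P : Setup n d)

lemma Lip_pos (i : Fin n) : 0 < P.Lip i :=
  one_div_pos.2 (P.hθ i)

lemma add_sq_le_dconj (i : Fin n) (w : Evec d) {y : Evec d} (hy : y ∈ P.X i) :
    ip w y - P.f i y + P.θ i / 2 * ‖y - P.xt i w‖ ^ 2 ≤ P.dconj i w :=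
  (P.hstrong i).add_sq_le_of_forall_le (P.hfconv i) (P.hXconv i) (P.hxt_mem i w)
    (P.hxt_max i w) hy

lemma dconj_le (i : Fin n) (w w' : Evec d) :
    P.dconj i w' ≤ P.dconj i w + ip (w' - w) (P.xt i w) + P.Lip i / 2 * ‖w' - w‖ ^ 2 := by
  set x := P.xt i w
  set y := P.xt i w'
  have hθ := P.hθ i
  have hgrowth := P.add_sq_le_dconj i w (P.hxt_mem i w')
  have hsplit : ip w' y = ip w y + ip (w' - w) x + ip (w' - w) (y - x) := by
    simp only [ip, inner_sub_left, inner_sub_right]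
    ring
  have hcs : ip (w' - w) (y - x) ≤ ‖w' - w‖ * ‖y - x‖ := real_inner_le_norm _ _
  have hyoung : ‖w' - w‖ * ‖y - x‖ ≤ P.θ i / 2 * ‖y - x‖ ^ 2 + P.Lip i / 2 * ‖w' - w‖ ^ 2 := by
    have e : P.θ i / 2 * ‖y - x‖ ^ 2 + P.Lip i / 2 * ‖w' - w‖ ^ 2 - ‖w' - w‖ * ‖y - x‖
        = (‖w' - w‖ - P.θ i * ‖y - x‖) ^ 2 / (2 * P.θ i) := by
      rw [Lip]
      field_simp
      ring
    rw [← sub_nonneg, e]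
    positivity
  change ip w' y - P.f i y ≤ _
  linarith

lemma D_le (w w' : ENvec n d) :
    P.D w' ≤ P.D w + ⟪w' - w, P.xtv w⟫_ℝ + ∑ i, P.Lip i / 2 * ‖w' i - w i‖ ^ 2 := by
  simp only [D, PiLp.inner_apply, ← Finset.sum_add_distrib]
  exact Finset.sum_le_sum fun i _ => P.dconj_le i (w i) (w' i)

lemma neg_Fstar_le_D {w : ENvec n d} (hw : w ∈ Sperp n d) : -P.Fstar ≤ P.D w := by
  have hxstar : ∀ i, P.xstar ∈ P.X i := Set.mem_iInter.1 P.hxstar_mem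
  have hsum : ∑ i, ip (w i) P.xstar = 0 := by
    simp only [ip, ← sum_inner]
    rw [show ∑ i, w i = 0 from hw, inner_zero_left]
  calc -P.Fstar = ∑ i, (ip (w i) P.xstar - P.f i P.xstar) := by
        rw [Finset.sum_sub_distrib, hsum, Fstar, zero_sub]
    _ ≤ P.D w := Finset.sum_le_sum fun i _ => P.hxt_max i (w i) _ (hxstar i)

lemma Dstar_le_D {w : ENvec n d} (hw : w ∈ Sperp n d) : P.Dstar ≤ P.D w :=
  csInf_le ⟨-P.Fstar, by rintro _ ⟨v, hv, rfl⟩; exact P.neg_Fstar_le_D hv⟩ ⟨w, hw, rfl⟩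

end Setup

section BlockMul

variable {n d : ℕ}

lemma blockMul_apply (M : Matrix (Fin n) (Fin n) ℝ) (x : ENvec n d) (i : Fin n) :
    blockMul M x i = ∑ j, M i j • x j := rfl

lemma inner_blockMul (M : Matrix (Fin n) (Fin n) ℝ) (x y : ENvec n d) :
    ⟪x, blockMul M y⟫_ℝ = ∑ i, ∑ j, M i j * ⟪x i, y j⟫_ℝ := by
  rw [PiLp.inner_apply]
  simp only [blockMul_apply, inner_sum, real_inner_smul_right]

lemma inner_blockMul_eq_inner_blockMul_transpose (M : Matrix (Fin n) (Fin n) ℝ) (x y : ENvec n d) :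
    ⟪x, blockMul M y⟫_ℝ = ⟪blockMul Mᵀ x, y⟫_ℝ := by
  rw [real_inner_comm y (blockMul Mᵀ x), inner_blockMul, inner_blockMul, Finset.sum_comm]
  simp only [Matrix.transpose_apply, real_inner_comm]

lemma blockMul_mul (A B : Matrix (Fin n) (Fin n) ℝ) (x : ENvec n d) :
    blockMul (A * B) x = blockMul A (blockMul B x) := by
  ext1 i
  simp only [blockMul_apply, Matrix.mul_apply, Finset.smul_sum, Finset.sum_smul, smul_smul]
  exact Finset.sum_comm

lemma blockMul_diagonal_apply (v : Fin n → ℝ) (x : ENvec n d) (i : Fin n) :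
    blockMul (Matrix.diagonal v) x i = v i • x i := by
  simp [blockMul_apply, Matrix.diagonal_apply, ite_smul]

lemma Matrix.PosSemidef.exists_inner_blockMul_eq {M : Matrix (Fin n) (Fin n) ℝ}
    (hM : M.PosSemidef) : ∃ B : Matrix (Fin n) (Fin n) ℝ,
      ∀ x y : ENvec n d, ⟪x, blockMul M y⟫_ℝ = ⟪blockMul B x, blockMul B y⟫_ℝ := by
  obtain ⟨B, rfl⟩ := CStarAlgebra.nonneg_iff_eq_star_mul_self.mp hM.nonneg
  refine ⟨B, fun x y => ?_⟩
  rw [blockMul_mul, inner_blockMul_eq_inner_blockMul_transpose, Matrix.star_eq_conjTranspose,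
    Matrix.conjTranspose_eq_transpose_of_trivial, Matrix.transpose_transpose]

lemma Matrix.PosSemidef.inner_blockMul_self_nonneg {M : Matrix (Fin n) (Fin n) ℝ}
    (hM : M.PosSemidef) (x : ENvec n d) : 0 ≤ ⟪x, blockMul M x⟫_ℝ := by
  obtain ⟨B, hB⟩ := hM.exists_inner_blockMul_eq (d := d)
  rw [hB]
  exact real_inner_self_nonneg

lemma Matrix.PosSemidef.inner_blockMul_sq_le {M : Matrix (Fin n) (Fin n) ℝ}
    (hM : M.PosSemidef) (x y : ENvec n d) :
    ⟪x, blockMul M y⟫_ℝ ^ 2 ≤ ⟪x, blockMul M x⟫_ℝ * ⟪y, blockMul M y⟫_ℝ := by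
  obtain ⟨B, hB⟩ := hM.exists_inner_blockMul_eq (d := d)
  rw [hB, hB, hB, sq]
  exact real_inner_mul_inner_self_le _ _

lemma inner_blockMul_smul_diagonal_sub (δ : ℝ) (v : Fin n → ℝ) (M : Matrix (Fin n) (Fin n) ℝ)
    (x : ENvec n d) :
    ⟪x, blockMul (δ • Matrix.diagonal v - M) x⟫_ℝ
      = δ * ∑ i, v i * ‖x i‖ ^ 2 - ⟪x, blockMul M x⟫_ℝ := by
  simp only [inner_blockMul, Matrix.sub_apply, Matrix.smul_apply, Matrix.diagonal_apply,
    sub_mul, Finset.sum_sub_distrib, smul_eq_mul, mul_ite, mul_zero, ite_mul, zero_mul,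
    Finset.sum_ite_eq, Finset.mem_univ, if_true, Finset.mul_sum, real_inner_self_eq_norm_sq,
    mul_assoc]

lemma sum_mul_norm_blockMul_sq_le {H : Matrix (Fin n) (Fin n) ℝ} (hH : H.PosSemidef)
    {L : Fin n → ℝ} (hL : ∀ i, 0 < L i) {δ : ℝ} (hδ0 : 0 ≤ δ)
    (hδ : (δ • Matrix.diagonal (fun i => (L i)⁻¹) - H).PosSemidef) (x : ENvec n d) :
    ∑ i, L i * ‖blockMul H x i‖ ^ 2 ≤ δ * ⟪x, blockMul H x⟫_ℝ := by
  set u := blockMul H x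
  set y := blockMul (Matrix.diagonal L) u
  set Q := ∑ i, L i * ‖u i‖ ^ 2
  have hHt : Hᵀ = H := by
    simpa [Matrix.conjTranspose_eq_transpose_of_trivial] using hH.isHermitian.eq
  have hQ_eq : ⟪x, blockMul H y⟫_ℝ = Q := by
    rw [inner_blockMul_eq_inner_blockMul_transpose, hHt, PiLp.inner_apply]
    simp only [y, Q, u, blockMul_diagonal_apply, real_inner_smul_right, real_inner_self_eq_norm_sq]
  have hyHy : ⟪y, blockMul H y⟫_ℝ ≤ δ * Q := by
    have h := hδ.inner_blockMul_self_nonneg y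
    rw [inner_blockMul_smul_diagonal_sub] at h
    have e : ∑ i, (L i)⁻¹ * ‖y i‖ ^ 2 = Q := by
      refine Finset.sum_congr rfl fun i _ => ?_
      rw [show y i = L i • u i from blockMul_diagonal_apply L u i, norm_smul, Real.norm_of_nonneg
        (hL i).le]
      field_simp [(hL i).ne']
    rw [e] at h
    linarith
  -- Cauchy–Schwarz for the semi-inner product `⟪·, H ·⟫`, applied to `x` and `y = Λ H x`
  have hsq : Q * Q ≤ δ * ⟪x, blockMul H x⟫_ℝ * Q := by
    have hcs := hH.inner_blockMul_sq_le x y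
    rw [hQ_eq] at hcs
    nlinarith [hH.inner_blockMul_self_nonneg x]
  have hQ0 : 0 ≤ Q := Finset.sum_nonneg fun i _ => mul_nonneg (hL i).le (sq_nonneg _)
  rcases hQ0.eq_or_lt with hQ | hQ
  · rw [← hQ]
    exact mul_nonneg hδ0 (hH.inner_blockMul_self_nonneg x)
  · exact le_of_mul_le_mul_right hsq hQ

end BlockMul

namespace GraphSeq

variable {n : ℕ} (Gs : GraphSeq n)

def weight (k : ℕ) (i j : Fin n) : ℝ := if Gs.adj k i j = true then Gs.h k i j else 0

lemma weight_comm (k : ℕ) (i j : Fin n) : Gs.weight k i j = Gs.weight k j i := by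
  rw [weight, weight, Gs.adj_symm, Gs.h_symm]

lemma weight_nonneg (k : ℕ) (i j : Fin n) : 0 ≤ Gs.weight k i j := by
  unfold weight
  split_ifs with h
  · exact Gs.hlow_pos.le.trans (Gs.h_mem k i j h).1
  · exact le_rfl

lemma H_apply (k : ℕ) (i j : Fin n) :
    Gs.H k i j = (if i = j then ∑ l, Gs.weight k i l else 0) - Gs.weight k i j := by
  by_cases h : i = j
  · subst h
    simp [H, weight, Gs.adj_irrefl]
  · simp only [H, weight, Matrix.of_apply, h, if_false, zero_sub]
    split_ifs <;> simp

lemma H_comm (k : ℕ) (i j : Fin n) : Gs.H k i j = Gs.H k j i := by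
  by_cases h : i = j
  · rw [h]
  · simp [H_apply, h, Ne.symm h, Gs.weight_comm k i j]

lemma sum_H_mul_inner {F : Type*} [NormedAddCommGroup F] [InnerProductSpace ℝ F] (k : ℕ)
    (x : Fin n → F) :
    ∑ i, ∑ j, Gs.H k i j * ⟪x i, x j⟫_ℝ
      = 1 / 2 * ∑ i, ∑ j, Gs.weight k i j * ‖x i - x j‖ ^ 2 := by
  have hswap : ∑ i, ∑ j, Gs.weight k i j * ‖x j‖ ^ 2
      = ∑ i, ∑ j, Gs.weight k i j * ‖x i‖ ^ 2 := by
    rw [Finset.sum_comm]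
    simp only [Gs.weight_comm k _ _]
  have hexpand : ∀ i j, Gs.weight k i j * ‖x i - x j‖ ^ 2 = Gs.weight k i j * ‖x i‖ ^ 2
      + Gs.weight k i j * ‖x j‖ ^ 2 - 2 * (Gs.weight k i j * ⟪x i, x j⟫_ℝ) := by
    intro i j
    rw [norm_sub_sq_real]
    ring
  simp only [hexpand, Finset.sum_add_distrib, Finset.sum_sub_distrib, ← Finset.mul_sum, hswap,
    H_apply, sub_mul, ite_mul, zero_mul, Finset.sum_ite_eq, Finset.mem_univ, if_true,
    real_inner_self_eq_norm_sq, Finset.sum_mul]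
  ring

lemma posSemidef_H (k : ℕ) : (Gs.H k).PosSemidef := by
  refine Matrix.PosSemidef.of_dotProduct_mulVec_nonneg ?_ fun x => ?_
  · ext i j
    simp [Gs.H_comm k i j]
  · have hquad : star x ⬝ᵥ (Gs.H k *ᵥ x) = ∑ i, ∑ j, Gs.H k i j * ⟪x i, x j⟫_ℝ := by
      simp only [star_trivial, dotProduct, Matrix.mulVec, Finset.mul_sum, RCLike.inner_apply,
        conj_trivial]
      exact Finset.sum_congr rfl fun i _ => Finset.sum_congr rfl fun j _ => by ring
    rw [hquad, Gs.sum_H_mul_inner k x]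
    exact mul_nonneg (by norm_num) <| Finset.sum_nonneg fun i _ => Finset.sum_nonneg fun j _ =>
      mul_nonneg (Gs.weight_nonneg k i j) (sq_nonneg _)

variable {d : ℕ}

lemma inner_blockMul_H (k : ℕ) (x : ENvec n d) :
    ⟪x, blockMul (Gs.H k) x⟫_ℝ = 1 / 2 * ∑ i, ∑ j, Gs.weight k i j * ‖x i - x j‖ ^ 2 := by
  rw [inner_blockMul, Gs.sum_H_mul_inner]

lemma hlow_mul_norm_sub_sq_le {k : ℕ} {i j : Fin n} (hij : Gs.adj k i j = true)
    (x : ENvec n d) : Gs.hlow * ‖x i - x j‖ ^ 2 ≤ ⟪x, blockMul (Gs.H k) x⟫_ℝ := by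
  have hne : (i, j) ≠ (j, i) := by
    intro h
    rw [(Prod.mk.inj h).1, Gs.adj_irrefl] at hij
    exact Bool.false_ne_true hij
  set g : Fin n × Fin n → ℝ := fun p => Gs.weight k p.1 p.2 * ‖x p.1 - x p.2‖ ^ 2
  have hg : g (j, i) = g (i, j) := by simp only [g, Gs.weight_comm k j i, norm_sub_rev]
  have hpair : g (i, j) + g (j, i) ≤ ∑ p, g p := by
    rw [← Finset.sum_pair hne]
    exact Finset.sum_le_sum_of_subset_of_nonneg (Finset.subset_univ _) fun p _ _ =>
      mul_nonneg (Gs.weight_nonneg k _ _) (sq_nonneg _)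
  have hweight : Gs.hlow ≤ Gs.weight k i j := by
    simpa only [weight, hij, if_true] using (Gs.h_mem k i j hij).1
  rw [inner_blockMul_H, ← Fintype.sum_prod_type']
  nlinarith [mul_le_mul_of_nonneg_right hweight (sq_nonneg ‖x i - x j‖)]

lemma sum_H_apply_left (k : ℕ) (j : Fin n) : ∑ i, Gs.H k i j = 0 := by
  simp only [Gs.H_comm k _ j, H_apply, Finset.sum_sub_distrib, Finset.sum_ite_eq,
    Finset.mem_univ, if_true, sub_self]

lemma blockMul_H_mem_Sperp (k : ℕ) (u : ENvec n d) : blockMul (Gs.H k) u ∈ Sperp n d := by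
  change ∑ i, blockMul (Gs.H k) u i = 0
  simp only [blockMul_apply]
  rw [Finset.sum_comm]
  simp only [← Finset.sum_smul, sum_H_apply_left, zero_smul, Finset.sum_const_zero]

lemma iSup_norm_sub_le (k : ℕ) (x : ENvec n d) :
    ⨆ e : {e : Fin n × Fin n // Gs.adj k e.1 e.2 = true}, ‖x e.1.1 - x e.1.2‖
      ≤ √(⟪x, blockMul (Gs.H k) x⟫_ℝ / Gs.hlow) :=
  Real.iSup_le (fun e => Real.le_sqrt_of_sq_le <| (le_div_iff₀' Gs.hlow_pos).2 <|
    Gs.hlow_mul_norm_sub_sq_le e.2 x) (Real.sqrt_nonneg _)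

end GraphSeq

namespace Algo

variable {n d : ℕ} {P : Setup n d} {Gs : GraphSeq n} (A : Algo n d P Gs)

lemma w_mem_Sperp (k : ℕ) : A.w k ∈ Sperp n d := by
  induction k with
  | zero => exact A.hw0
  | succ k ih =>
    rw [A.hrec k]
    exact Submodule.sub_mem _ ih (Submodule.smul_mem _ _ (Gs.blockMul_H_mem_Sperp k _))

lemma D_succ_add_le (k : ℕ) :
    P.D (A.w (k + 1)) + (A.α k - A.α k ^ 2 * A.δ / 2) * ⟪A.x k, blockMul (Gs.H k) (A.x k)⟫_ℝ
      ≤ P.D (A.w k) := by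
  set u := blockMul (Gs.H k) (A.x k)
  have hdiff : A.w (k + 1) - A.w k = (-A.α k) • u := by
    rw [A.hrec k, sub_sub_cancel_left, neg_smul]
    rfl
  have hlin : ⟪A.w (k + 1) - A.w k, P.xtv (A.w k)⟫_ℝ = -A.α k * ⟪A.x k, u⟫_ℝ := by
    rw [hdiff, real_inner_smul_left, real_inner_comm]
    rfl
  have hquad : ∑ i, P.Lip i / 2 * ‖A.w (k + 1) i - A.w k i‖ ^ 2
      = A.α k ^ 2 / 2 * ∑ i, P.Lip i * ‖u i‖ ^ 2 := by
    rw [Finset.mul_sum]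
    refine Finset.sum_congr rfl fun i _ => ?_
    rw [← PiLp.sub_apply, hdiff, PiLp.smul_apply, norm_smul, Real.norm_eq_abs, mul_pow, sq_abs]
    ring
  have hcurv := sum_mul_norm_blockMul_sq_le (Gs.posSemidef_H k) P.Lip_pos A.hδ_pos.le (A.hδ k)
    (A.x k)
  have hstep := P.D_le (A.w k) (A.w (k + 1))
  rw [hlin, hquad] at hstep
  nlinarith [sq_nonneg (A.α k)]

-- `t ↦ t - t² δ / 2` is concave, so on `[α̲, ᾱ]` it is smallest at an endpoint.
lemma ρ_le (k : ℕ) : A.ρ ≤ A.α k - A.α k ^ 2 * A.δ / 2 := by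
  obtain ⟨hlo, hhi⟩ := A.hα k
  have hδ := A.hδ_pos
  by_cases h : A.δ * (A.α k + A.αlo) ≤ 2
  · exact (min_le_left _ _).trans (by nlinarith)
  · exact (min_le_right _ _).trans (by nlinarith [mul_le_mul_of_nonneg_left hhi hδ.le])

lemma ρ_pos : 0 < A.ρ := by
  obtain ⟨hlo, hhi⟩ := A.hα 0
  have hδ := A.hδ_pos
  have hhiδ : A.αhi * A.δ < 2 := (lt_div_iff₀ hδ).1 A.hαhi
  have hαlo := A.hαlo
  have hloδ : A.αlo * A.δ < 2 := by nlinarith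
  exact lt_min (by nlinarith [mul_pos hαlo (sub_pos.2 hloδ)])
    (by nlinarith [mul_pos (hαlo.trans_le (hlo.trans hhi)) (sub_pos.2 hhiδ)])

lemma D_add_sum_le (N : ℕ) :
    P.D (A.w N) + A.ρ * ∑ k ∈ Finset.range N, ⟪A.x k, blockMul (Gs.H k) (A.x k)⟫_ℝ
      ≤ P.D (A.w 0) := by
  induction N with
  | zero => simp
  | succ N ih =>
    have hρ := mul_le_mul_of_nonneg_right (A.ρ_le N)
      ((Gs.posSemidef_H N).inner_blockMul_self_nonneg (A.x N))
    rw [Finset.sum_range_succ, mul_add]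
    linarith [A.D_succ_add_le N]

lemma sum_range_inner_blockMul_le (N : ℕ) :
    ∑ k ∈ Finset.range N, ⟪A.x k, blockMul (Gs.H k) (A.x k)⟫_ℝ
      ≤ (P.D (A.w 0) - P.Dstar) / A.ρ := by
  rw [le_div_iff₀' A.ρ_pos]
  linarith [A.D_add_sum_le N, P.Dstar_le_D (A.w_mem_Sperp N)]

end Algo

theorem stmt8 {n d : ℕ} (P : Setup n d) (Gs : GraphSeq n) (A : Algo n d P Gs) :
    Summable (fun k => ipN (A.x k) (blockMul (Gs.H k) (A.x k))) ∧
    (∑' k : ℕ, ipN (A.x k) (blockMul (Gs.H k) (A.x k))) ≤ (P.D (A.w 0) - P.Dstar) / A.ρ ∧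
    Filter.Tendsto
      (fun k => ⨆ e : {e : Fin n × Fin n // Gs.adj k e.1 e.2 = true},
        ‖A.x k e.1.1 - A.x k e.1.2‖)
      Filter.atTop (nhds 0) := by
  have hnonneg : ∀ k, 0 ≤ ipN (A.x k) (blockMul (Gs.H k) (A.x k)) := fun k =>
    (Gs.posSemidef_H k).inner_blockMul_self_nonneg (A.x k)
  have hsum := summable_of_sum_range_le hnonneg A.sum_range_inner_blockMul_le
  refine ⟨hsum, Real.tsum_le_of_sum_range_le hnonneg A.sum_range_inner_blockMul_le, ?_⟩
  have hsqrt : Tendsto (fun k => √(ipN (A.x k) (blockMul (Gs.H k) (A.x k)) / Gs.hlow)) atTop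
      (𝓝 0) := by
    simpa using (hsum.tendsto_atTop_zero.div_const Gs.hlow).sqrt
  exact squeeze_zero (fun k => Real.iSup_nonneg fun e => norm_nonneg _)
    (fun k => Gs.iSup_norm_sub_le k (A.x k)) hsqrt
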